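/- arXiv:2501.18275 — 3 statements merged into one kernel-verified Lean document; each statement's English description precedes it below -/
import Mathlib

section
/- For every real number r ≥ 0 and all real numbers a, b in the unit interval [0,1]: min(r · min(a + b, 1), 1) ≤ min(min(r·a, 1) + min(r·b, 1), 1); moreover, if r ≥ 1 then equality holds. In other words, the identity map m_r : rA ⊗ rB → r(A ⊗ B) is non-expansive for all r ≥ 0, and is an isometry when r ≥ 1. -/
/-- The identity map `m_r : rA ⊗ rB → r(A ⊗ B)` is non-expansive
for all `r ≥ 0`, and an isometry when `r ≥ 1`: in terms of distances `a`, `b`. -/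
theorem tensor_scaling_interchange
    (r : ℝ) (hr : 0 ≤ r)
    (a b : ℝ) (ha : a ∈ Set.Icc (0 : ℝ) 1) (hb : b ∈ Set.Icc (0 : ℝ) 1) :
    min (r * min (a + b) 1) 1 ≤ min (min (r * a) 1 + min (r * b) 1) 1 ∧
    (1 ≤ r → min (r * min (a + b) 1) 1 = min (min (r * a) 1 + min (r * b) 1) 1) := by
  obtain ⟨ha0, ha1⟩ := ha
  obtain ⟨hb0, hb1⟩ := hb
  have e : r * (a + b) = r * a + r * b := by ring
  have pa : 0 ≤ r * a := mul_nonneg hr ha0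
  have pb : 0 ≤ r * b := mul_nonneg hr hb0
  have la : r * a ≤ r := by nlinarith
  have lb : r * b ≤ r := by nlinarith
  have key : min (r * min (a + b) 1) 1 ≤ min (min (r * a) 1 + min (r * b) 1) 1 := by
    rcases le_total (a + b) 1 with h | h
    · have h' : r * (a + b) ≤ r := by nlinarith
      simp only [min_def]
      split_ifs <;> linarith
    · have h' : r ≤ r * (a + b) := by nlinarith
      simp only [min_def]
      split_ifs <;> linarith
  refine ⟨key, fun hr1 => le_antisymm key ?_⟩
  have haa : a ≤ r * a := by nlinarith
  have hbb : b ≤ r * b := by nlinarith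
  rcases le_total (a + b) 1 with h | h
  · have h' : r * (a + b) ≤ r := by nlinarith
    simp only [min_def]
    split_ifs <;> linarith
  · have h' : r ≤ r * (a + b) := by nlinarith
    simp only [min_def]
    split_ifs <;> linarith
end

section
/- Let (X, d) be a metric space, let r be a real number with 0 ≤ r < ∞, and let x, y ∈ X. Then the supremum, over all functions φ : X → [0,1] satisfying |φ(a) − φ(b)| ≤ min(r·d(a,b), 1) for all a, b ∈ X, of the quantity max(φ(y) − φ(x), 0), equals min(r·d(x,y), 1). (Semantically: quantitative Leibniz equality ∀φ. φ(x) ⊸ φ(y) coincides with the scaled equality predicate r(x = y).) -/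
/-- Quantitative Leibniz equality. For a metric space `X`,
`0 ≤ r < ∞` and `x y : X`, the supremum over all `r`-sensitive predicates
`φ : X → [0,1]` of `max (φ y - φ x) 0` equals `min (r * d x y) 1`. -/
theorem leibniz_equality
    {X : Type*} [MetricSpace X] (r : ℝ) (hr : 0 ≤ r) (x y : X) :
    sSup {v : ℝ | ∃ φ : X → ℝ,
        (∀ a, φ a ∈ Set.Icc (0 : ℝ) 1) ∧
        (∀ a b : X, |φ a - φ b| ≤ min (r * dist a b) 1) ∧
        v = max (φ y - φ x) 0} =
      min (r * dist x y) 1 := by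
  set S := {v : ℝ | ∃ φ : X → ℝ,
        (∀ a, φ a ∈ Set.Icc (0 : ℝ) 1) ∧
        (∀ a b : X, |φ a - φ b| ≤ min (r * dist a b) 1) ∧
        v = max (φ y - φ x) 0} with hS
  have hub : ∀ v ∈ S, v ≤ min (r * dist x y) 1 := by
    rintro v ⟨φ, _, hsens, rfl⟩
    have h := hsens y x
    rw [dist_comm y x] at h
    have : φ y - φ x ≤ min (r * dist x y) 1 := (le_abs_self _).trans h
    exact max_le this (le_min (mul_nonneg hr dist_nonneg) zero_le_one)
  -- witness
  have hmem : min (r * dist x y) 1 ∈ S := by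
    refine ⟨fun a => min (r * dist a x) 1, ?_, ?_, ?_⟩
    · intro a
      exact ⟨le_min (mul_nonneg hr dist_nonneg) zero_le_one, min_le_right _ _⟩
    · intro a b
      have h1 : |min (r * dist a x) 1 - min (r * dist b x) 1| ≤
          |r * dist a x - r * dist b x| :=
        (abs_min_sub_min_le_max ..).trans (by simp)
      have h2 : |r * dist a x - r * dist b x| ≤ r * dist a b := by
        rw [← mul_sub, abs_mul, abs_of_nonneg hr]
        exact mul_le_mul_of_nonneg_left (abs_dist_sub_le a b x) hr
      have h3 : |min (r * dist a x) 1 - min (r * dist b x) 1| ≤ 1 := by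
        rw [abs_sub_le_iff]
        constructor <;> nlinarith [min_le_right (r * dist a x) (1:ℝ),
          min_le_right (r * dist b x) (1:ℝ),
          le_min (mul_nonneg hr (dist_nonneg (x := a) (y := x))) zero_le_one,
          le_min (mul_nonneg hr (dist_nonneg (x := b) (y := x))) zero_le_one]
      exact le_min (h1.trans h2) h3
    · have : min (r * dist y x) 1 - min (r * dist x x) 1 = min (r * dist x y) 1 := by
        simp [dist_comm y x]
      rw [this]
      exact (max_eq_left (le_min (mul_nonneg hr dist_nonneg) zero_le_one)).symm
  refine le_antisymm (csSup_le ⟨_, hmem⟩ hub) (le_csSup ⟨_, fun v hv => hub v hv⟩ hmem)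
end

section
/- Let N ≥ 1 be a natural number and let p, q : Fin N → Bool be two positions on the N-dimensional hypercube. For i ∈ {0, 1, …, N} let flip_i denote the map on Fin N → Bool that negates the i-th coordinate when 1 ≤ i ≤ N and is the identity when i = 0. Then there exists a permutation σ of {0, 1, …, N} such that Σ_{i=0}^{N} hammingDist(flip_i(p), flip_{σ(i)}(q)) = (N − 1) · hammingDist(p, q), where hammingDist counts the number of coordinates at which two vectors differ. -/
/-- One-step coupling for the hypercube random walk. For any two
positions `p q : Fin N → Bool` there is a permutation `σ` of `{0, …, N}` such
that `Σ_{i=0}^{N} hammingDist (flip i p) (flip (σ i) q) = (N-1) * hammingDist p q`,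
where `flip i` negates coordinate `i-1` when `1 ≤ i ≤ N` and is the identity when
`i = 0`. -/
theorem hypercube_coupling
    (N : ℕ) (hN : 1 ≤ N) (p q : Fin N → Bool)
    (flip : Fin (N + 1) → (Fin N → Bool) → (Fin N → Bool))
    (hflip : ∀ (i : Fin (N + 1)) (v : Fin N → Bool) (j : Fin N),
      flip i v j = if (j : ℕ) + 1 = (i : ℕ) then !(v j) else v j) :
    ∃ σ : Equiv.Perm (Fin (N + 1)),
      ∑ i : Fin (N + 1), hammingDist (flip i p) (flip (σ i) q) =
        (N - 1) * hammingDist p q := by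
  classical
  set D : Finset (Fin N) := Finset.univ.filter (fun j => p j ≠ q j) with hD
  set l : List (Fin (N + 1)) := (0 : Fin (N + 1)) :: D.toList.map Fin.succ with hl
  have hnodup : l.Nodup := by
    refine List.nodup_cons.mpr ⟨?_, ?_⟩
    · simp [Fin.succ_ne_zero]
    · exact (D.nodup_toList).map (Fin.succ_injective N)
  set σ : Equiv.Perm (Fin (N + 1)) := l.formPerm with hσ
  have key1 : ∀ j ∈ D, σ (Fin.succ j) ≠ Fin.succ j := by
    intro j hj
    have hmem : Fin.succ j ∈ l := by
      simp only [hl, List.mem_cons, List.mem_map]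
      exact Or.inr ⟨j, by simpa using hj, rfl⟩
    refine (List.formPerm_apply_mem_ne_self_iff _ hnodup _ hmem).mpr ?_
    have : 1 ≤ D.toList.length := by
      rw [Finset.length_toList]
      exact Finset.card_pos.mpr ⟨j, hj⟩
    simp only [hl, List.length_cons, List.length_map]
    omega
  have key2 : ∀ j : Fin N, j ∉ D → σ (Fin.succ j) = Fin.succ j := by
    intro j hj
    refine List.formPerm_apply_of_notMem ?_
    simp only [hl, List.mem_cons, List.mem_map]
    rintro (h | ⟨a, ha, h⟩)
    · exact Fin.succ_ne_zero j h
    · exact hj (by simpa using (Fin.succ_injective N h ▸ (Finset.mem_toList.mp ha)))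
  refine ⟨σ, ?_⟩
  have hc : ∀ (j : Fin N) (i : Fin (N + 1)), ((j : ℕ) + 1 = (i : ℕ)) ↔ i = Fin.succ j := by
    intro j i
    rw [Fin.ext_iff, Fin.val_succ, eq_comm]
  have hper : ∀ j : Fin N,
      (∑ i : Fin (N + 1), if flip i p j ≠ flip (σ i) q j then 1 else 0) =
        if p j ≠ q j then N - 1 else 0 := by
    intro j
    by_cases hpq : p j = q j
    · rw [if_neg (by simpa using hpq)]
      have hjD : j ∉ D := by simp [hD, hpq]
      have hfix := key2 j hjD
      refine Finset.sum_eq_zero fun i _ => ?_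
      rw [hflip, hflip]
      by_cases h : i = Fin.succ j
      · subst h
        rw [if_pos ((hc j _).mpr rfl), if_pos ((hc j _).mpr hfix), hpq]
        simp
      · have h2 : σ i ≠ Fin.succ j := fun h' => h (σ.injective (h'.trans hfix.symm))
        rw [if_neg (fun h' => h ((hc j i).mp h')), if_neg (fun h' => h2 ((hc j _).mp h')), hpq]
        simp
    · rw [if_pos hpq]
      have hjD : j ∈ D := by simp [hD, hpq]
      have hmove := key1 j hjD
      have hqj : q j = !(p j) := by
        cases hp : p j <;> cases hq : q j <;> simp_all
      set b : Fin (N + 1) := σ.symm (Fin.succ j) with hb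
      have hbne : b ≠ Fin.succ j := by
        intro h
        apply hmove
        have := congrArg σ h
        rw [hb, Equiv.apply_symm_apply] at this
        exact this.symm
      have hσb : ∀ i : Fin (N + 1), σ i = Fin.succ j ↔ i = b := by
        intro i
        constructor
        · intro h; rw [hb, ← h, Equiv.symm_apply_apply]
        · intro h; rw [h, hb, Equiv.apply_symm_apply]
      rw [← Finset.card_filter]
      have hfilt : (Finset.univ.filter fun i : Fin (N + 1) => flip i p j ≠ flip (σ i) q j) =
          Finset.univ \ {Fin.succ j, b} := by
        ext i
        simp only [Finset.mem_filter, Finset.mem_univ, true_and, Finset.mem_sdiff,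
          Finset.mem_insert, Finset.mem_singleton]
        rw [hflip, hflip]
        by_cases h1 : i = Fin.succ j
        · by_cases h2 : σ i = Fin.succ j
          · exact absurd (h1 ▸ h2) hmove
          · rw [if_pos ((hc j i).mpr h1), if_neg (fun h' => h2 ((hc j _).mp h')), hqj]
            simp [h1]
        · by_cases h2 : σ i = Fin.succ j
          · rw [if_neg (fun h' => h1 ((hc j i).mp h')), if_pos ((hc j _).mpr h2), hqj]
            have hib : i = b := (hσb i).mp h2
            simp [hib]
          · rw [if_neg (fun h' => h1 ((hc j i).mp h')), if_neg (fun h' => h2 ((hc j _).mp h'))]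
            have hib : i ≠ b := fun h => h2 ((hσb i).mpr h)
            simp [h1, hib, hpq]
      rw [hfilt, Finset.card_sdiff_of_subset (Finset.subset_univ _), Finset.card_univ, Fintype.card_fin,
        Finset.card_insert_of_notMem (by simpa using hbne.symm), Finset.card_singleton]
      omega
  have hdist : ∀ (x y : Fin N → Bool),
      hammingDist x y = ∑ j : Fin N, if x j ≠ y j then 1 else 0 := by
    intro x y
    rw [hammingDist, Finset.card_filter]
  calc ∑ i : Fin (N + 1), hammingDist (flip i p) (flip (σ i) q)
      = ∑ i : Fin (N + 1), ∑ j : Fin N, if flip i p j ≠ flip (σ i) q j then 1 else 0 := by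
        simp_rw [hdist]
    _ = ∑ j : Fin N, ∑ i : Fin (N + 1), if flip i p j ≠ flip (σ i) q j then 1 else 0 :=
        Finset.sum_comm
    _ = ∑ j : Fin N, if p j ≠ q j then N - 1 else 0 := by
        exact Finset.sum_congr rfl fun j _ => hper j
    _ = (N - 1) * hammingDist p q := by
        rw [← Finset.sum_filter, Finset.sum_const, smul_eq_mul, hammingDist, Nat.mul_comm]
end
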